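/- arXiv:2203.09156 — 4 statements merged into one kernel-verified Lean document; each statement's English description precedes it below -/
import Mathlib

section
/- Let K be a number field and let T be a finite set of places of K that contains no 2-adic place (i.e., no finite place lying above 2). Then for every family (x_v)_{v∈T} with x_v ∈ K_v and every ε > 0 there exists ξ ∈ K such that |ξ − x_v|_v < ε for every v ∈ T, and ξ lies in the valuation ring O_{K_v} for every finite place v ∉ T whose residue characteristic is different from 2. (Equivalently: K is dense in the ring of adèles of K with the 2-adic components removed.) -/
/-!
Approximate the finite targets by some `z ∈ K` that is integral at every finite place outside
`Tfin`: write the approximants with a common denominator `d` and solve a Chinese remainder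
problem whose solution `b` is also highly divisible at the primes of `d`, so that `b / d` has
no poles outside `Tfin`. Then correct `z` at the infinite places by `c * m / 2 ^ n`, where
`c ∈ 𝓞 K` is nonzero and highly divisible at `Tfin`. Such a correction is integral at every
finite place prime to `2` and small at `Tfin`, and the corrections are dense at the infinite
places because `2⁻ⁿ 𝓞 K` is a lattice in `ℝ ^ r₁ × ℂ ^ r₂` of mesh tending to `0`.
-/

open IsDedekindDomain NumberField

open scoped Multiplicative

open WithZero Topology Module Submodule InfinitePlace.Completion
open scoped NumberField.AdeleRing

theorem exists_forall_exp_neg_natCast_lt {ι : Type*} (s : Finset ι) {f : ι → ℤᵐ⁰}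
    (hf : ∀ i ∈ s, f i ≠ 0) : ∃ N : ℕ, ∀ i ∈ s, exp (-(N : ℤ)) < f i := by
  classical
  choose! k hk using fun i hi ↦ exists_exp_neg_natCast_lt (hf i hi)
  refine ⟨s.sup k, fun i hi ↦ lt_of_le_of_lt ?_ (hk i hi)⟩
  exact exp_le_exp.mpr (neg_le_neg (Int.ofNat_le.mpr (Finset.le_sup hi)))

theorem Ideal.natCast_notMem_of_ringChar_quotient_ne {R : Type*} [CommRing R] (P : Ideal R)
    [P.IsPrime] {p : ℕ} (hp : p.Prime) (h : ringChar (R ⧸ P) ≠ p) : (p : R) ∉ P := by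
  intro hpP
  have hp0 : (p : R ⧸ P) = 0 := by
    rw [← map_natCast (Ideal.Quotient.mk P), Ideal.Quotient.eq_zero_iff_mem.mpr hpP]
  exact CharP.ringChar_ne_one ((hp.eq_one_or_self_of_dvd _ (ringChar.dvd hp0)).resolve_right h)

theorem DenseRange.algebraMap_const_add_mul {ι K A : Type*} [Field K] [Ring A]
    [TopologicalSpace A] [IsTopologicalRing A] [Algebra K A] {f : ι → K}
    (hf : DenseRange (algebraMap K A ∘ f)) (z : K) {c : K} (hc : c ≠ 0) :
    DenseRange fun i ↦ algebraMap K A (z + c * f i) := by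
  have hsurj : Function.Surjective fun a : A ↦ algebraMap K A z + algebraMap K A c * a :=
    fun b ↦ ⟨algebraMap K A c⁻¹ * (b - algebraMap K A z), by
      simp [← mul_assoc, ← map_mul, mul_inv_cancel₀ hc]⟩
  convert hsurj.denseRange.comp hf (by fun_prop) using 2
  simp only [Function.comp_apply, map_add, map_mul]

theorem Module.Basis.exists_smul_pow_inv_sub_lt {ι E : Type*} [Fintype ι] [NormedAddCommGroup E]
    [NormedSpace ℝ E] (b : Basis ι ℝ E) {q : ℝ} (hq : 1 < q) (x : E) {δ : ℝ} (hδ : 0 < δ) :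
    ∃ n : ℕ, ∃ z ∈ span ℤ (Set.range b), ‖(q ^ n)⁻¹ • z - x‖ < δ := by
  obtain ⟨n, hn⟩ := pow_unbounded_of_one_lt ((∑ i, ‖b i‖) / δ) hq
  have hqn : 0 < q ^ n := pow_pos (zero_lt_one.trans hq) n
  set z := ZSpan.floor b (q ^ n • x)
  have hz : ‖(z : E) - q ^ n • x‖ < q ^ n * δ := by
    rw [← norm_neg, neg_sub]
    exact (ZSpan.norm_fract_le b _).trans_lt ((div_lt_iff₀ hδ).mp hn)
  refine ⟨n, z, z.2, ?_⟩
  rwa [← inv_smul_smul₀ hqn.ne' x, ← smul_sub, _root_.norm_smul, norm_inv,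
    Real.norm_of_nonneg hqn.le, inv_mul_lt_iff₀ hqn]

namespace IsDedekindDomain.HeightOneSpectrum

variable {R : Type*} [CommRing R] [IsDedekindDomain R] {K : Type*} [Field K] [Algebra R K]
  [IsFractionRing R K]

theorem exists_forall_intValuation_sub_le (S : Finset (HeightOneSpectrum R))
    (r : HeightOneSpectrum R → R) (N : ℕ) :
    ∃ b : R, ∀ v ∈ S, v.intValuation (b - r v) ≤ exp (-(N : ℤ)) := by
  obtain ⟨b, hb⟩ := IsDedekindDomain.exists_forall_sub_mem_ideal (s := S) (fun v ↦ v.asIdeal)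
    (fun _ ↦ N) (fun v _ ↦ v.prime) (fun _ _ _ _ hvw h ↦ hvw (HeightOneSpectrum.ext h))
    (fun v ↦ r v)
  exact ⟨b, fun v hv ↦ (intValuation_le_pow_iff_mem v _ N).mpr (hb v hv)⟩

theorem exists_ne_zero_forall_intValuation_lt (S : Finset (HeightOneSpectrum R)) {γ : ℤᵐ⁰}
    (hγ : γ ≠ 0) : ∃ c : R, c ≠ 0 ∧ ∀ v ∈ S, v.intValuation c < γ := by
  obtain ⟨N, hN⟩ := exists_exp_neg_natCast_lt hγ
  have hI : ∏ v ∈ S, v.asIdeal ^ N ≠ ⊥ :=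
    Finset.prod_ne_zero_iff.mpr fun v _ ↦ pow_ne_zero N v.ne_bot
  obtain ⟨c, hcI, hc0⟩ := Submodule.exists_mem_ne_zero_of_ne_bot hI
  refine ⟨c, hc0, fun v hv ↦ lt_of_le_of_lt ?_ hN⟩
  exact (intValuation_le_pow_iff_mem v c N).mpr (Ideal.le_of_dvd (Finset.dvd_prod_of_mem _ hv) hcI)

theorem valuation_div_lt_of_intValuation_lt (v : HeightOneSpectrum R) {a d : R} (hd : d ≠ 0)
    {δ : ℤᵐ⁰} (h : v.intValuation a < δ * v.intValuation d) :
    v.valuation K (algebraMap R K a / algebraMap R K d) < δ := by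
  rwa [map_div₀, valuation_of_algebraMap, valuation_of_algebraMap,
    div_lt_iff₀ (zero_lt_iff.mpr (v.intValuation_ne_zero d hd))]

theorem valuation_mul_div_pow_le (v : HeightOneSpectrum R) {q : ℕ} (hq : (q : R) ∉ v.asIdeal)
    (c m : R) (n : ℕ) :
    v.valuation K (algebraMap R K c * (algebraMap R K m / (q : K) ^ n)) ≤ v.intValuation c := by
  rw [← map_natCast (algebraMap R K), map_mul, map_div₀, map_pow, valuation_of_algebraMap,
    valuation_of_algebraMap, valuation_of_algebraMap, intValuation_eq_one_iff.mpr hq, one_pow,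
    div_one]
  exact mul_le_of_le_one_right' (v.intValuation_le_one m)

theorem exists_forall_valuation_sub_lt_and_le_one (S : Finset (HeightOneSpectrum R))
    (y : HeightOneSpectrum R → K) {γ : ℤᵐ⁰} (hγ : γ ≠ 0) :
    ∃ z : K, (∀ v ∈ S, v.valuation K (z - y v) < γ) ∧ ∀ v ∉ S, v.valuation K z ≤ 1 := by
  classical
  obtain ⟨⟨d, hd⟩, hdy⟩ := IsLocalization.exist_integer_multiples (nonZeroDivisors R) S y
  choose r hr using hdy
  have hd0 : d ≠ 0 := nonZeroDivisors.ne_zero hd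
  have hdspan : Ideal.span {d} ≠ 0 := by simpa [Ideal.zero_eq_bot] using hd0
  -- `b / d` has no poles outside `S` once `b` is divisible enough at the primes dividing `d`.
  set E := S ∪ (Ideal.finite_factors hdspan).toFinset
  set δ := min γ 1
  obtain ⟨N, hN⟩ := exists_forall_exp_neg_natCast_lt E (f := fun v ↦ δ * v.intValuation d)
    fun v _ ↦ mul_ne_zero (by simp [δ, hγ]) (v.intValuation_ne_zero d hd0)
  obtain ⟨b, hb⟩ := exists_forall_intValuation_sub_le E (fun v ↦ if h : v ∈ S then r v h else 0) N
  have hclose : ∀ v ∈ E, v.valuation K (algebraMap R K (b - if h : v ∈ S then r v h else 0) /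
      algebraMap R K d) < δ := fun v hv ↦
    valuation_div_lt_of_intValuation_lt v hd0 ((hb v hv).trans_lt (hN v hv))
  refine ⟨algebraMap R K b / algebraMap R K d, fun v hv ↦ ?_, fun v hv ↦ ?_⟩
  · have hyv : algebraMap R K (r v hv) / algebraMap R K d = y v := by
      rw [hr v hv, Algebra.smul_def, mul_div_cancel_left₀ _
        ((map_ne_zero_iff _ (IsFractionRing.injective R K)).mpr hd0)]
    have := hclose v (Finset.mem_union_left _ hv)
    rw [dif_pos hv, map_sub, sub_div, hyv] at this
    exact this.trans_le (min_le_left _ _)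
  · by_cases hvd : d ∈ v.asIdeal
    · have hvE : v ∈ E := Finset.mem_union_right _ (by simpa [Ideal.dvd_span_singleton] using hvd)
      have := hclose v hvE
      rw [dif_neg hv, sub_zero] at this
      exact (this.trans_le (min_le_right _ _)).le
    · rw [map_div₀, valuation_of_algebraMap, valuation_of_algebraMap,
        intValuation_eq_one_iff.mpr hvd, div_one]
      exact v.intValuation_le_one b

theorem setOf_valued_sub_lt_mem_nhds (v : HeightOneSpectrum R) (x : v.adicCompletion K)
    {γ : ℤᵐ⁰} (hγ : γ ≠ 0) : {y | Valued.v (y - x) < γ} ∈ 𝓝 x := by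
  obtain ⟨a, ha0, hav⟩ := exists_ne_zero_forall_intValuation_lt {v} hγ
  set p : v.adicCompletion K := ((algebraMap R K a : K) : v.adicCompletion K)
  have hp : Valued.v p = v.intValuation a := by
    rw [valuedAdicCompletion_eq_valuation', valuation_of_algebraMap]
  have hopen : IsOpen {y | Valued.v.restrict (y - x) < Valued.v.restrict p} :=
    (Valued.isOpen_ball _ _).preimage (continuous_sub_right x)
  refine Filter.mem_of_superset (hopen.mem_nhds ?_) fun y hy ↦ ?_
  · simpa [hp] using zero_lt_iff.mpr (v.intValuation_ne_zero a ha0)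
  · simp only [Set.mem_ofPred_eq, Valuation.restrict_lt_iff] at hy ⊢
    exact hy.trans (hp ▸ hav v (Finset.mem_singleton_self v))

theorem exists_valued_sub_lt (v : HeightOneSpectrum R) (x : v.adicCompletion K)
    {γ : ℤᵐ⁰} (hγ : γ ≠ 0) : ∃ y : K, Valued.v ((y : v.adicCompletion K) - x) < γ :=
  (denseRange_algebraMap K v).mem_nhds (setOf_valued_sub_lt_mem_nhds v x hγ)

theorem exists_forall_valued_sub_lt_and_valuation_le_one (S : Finset (HeightOneSpectrum R))
    (x : (v : HeightOneSpectrum R) → v.adicCompletion K) {γ : ℤᵐ⁰} (hγ : γ ≠ 0) :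
    ∃ z : K, (∀ v ∈ S, Valued.v ((z : v.adicCompletion K) - x v) < γ) ∧
      ∀ v ∉ S, v.valuation K z ≤ 1 := by
  choose y hy using fun v ↦ exists_valued_sub_lt v (x v) hγ
  obtain ⟨z, hzy, hz⟩ := exists_forall_valuation_sub_lt_and_le_one S y hγ
  refine ⟨z, fun v hv ↦ ?_, hz⟩
  have hsub : ((z - y v : K) : v.adicCompletion K) = z - y v := by
    rw [eq_sub_iff_add_eq, ← adicCompletion.coe_add, sub_add_cancel]
  rw [← sub_add_sub_cancel _ (y v : v.adicCompletion K), ← hsub]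
  exact Valuation.map_add_lt _ (by rw [valuedAdicCompletion_eq_valuation']; exact hzy v hv)
    (hy v)

end IsDedekindDomain.HeightOneSpectrum

namespace NumberField

variable {K : Type*} [Field K] [NumberField K]

open scoped Classical in
theorem InfiniteAdeleRing.norm_apply_le_norm_ringEquiv_mixedSpace (a : K∞)
    (w : InfinitePlace K) : ‖a w‖ ≤ ‖ringEquiv_mixedSpace K a‖ := by
  by_cases hw : w.IsReal
  · calc ‖a w‖ = ‖extensionEmbeddingOfIsReal hw (a w)‖ :=
          ((isometry_extensionEmbeddingOfIsReal hw).norm_map_of_map_zero (map_zero _) _).symm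
      _ ≤ ‖(ringEquiv_mixedSpace K a).1‖ := norm_le_pi_norm (ringEquiv_mixedSpace K a).1 ⟨w, hw⟩
      _ ≤ _ := norm_fst_le _
  · rw [InfinitePlace.not_isReal_iff_isComplex] at hw
    calc ‖a w‖ = ‖extensionEmbedding w (a w)‖ :=
          ((isometry_extensionEmbedding w).norm_map_of_map_zero (map_zero _) _).symm
      _ ≤ ‖(ringEquiv_mixedSpace K a).2‖ := norm_le_pi_norm (ringEquiv_mixedSpace K a).2 ⟨w, hw⟩
      _ ≤ _ := norm_snd_le _

theorem mixedEmbedding_div_natCast_pow (x : K) {q : ℕ} (hq : q ≠ 0) (n : ℕ) :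
    mixedEmbedding K (x / q ^ n) = ((q : ℝ) ^ n)⁻¹ • mixedEmbedding K x := by
  rw [eq_inv_smul_iff₀ (by positivity), ← Nat.cast_pow, Nat.cast_smul_eq_nsmul, nsmul_eq_mul,
    ← map_natCast (mixedEmbedding K), ← map_mul, Nat.cast_pow,
    mul_div_cancel₀ _ (pow_ne_zero n (Nat.cast_ne_zero.mpr hq))]

theorem denseRange_algebraMap_div_pow {q : ℕ} (hq : 1 < q) :
    DenseRange fun p : 𝓞 K × ℕ ↦
      algebraMap K ((w : InfinitePlace K) → w.Completion) (algebraMap (𝓞 K) K p.1 / q ^ p.2) := by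
  classical
  rw [Metric.denseRange_iff]
  intro t r hr
  obtain ⟨n, z, hz, hzt⟩ := (mixedEmbedding.latticeBasis K).exists_smul_pow_inv_sub_lt
    (Nat.one_lt_cast.mpr hq) (InfiniteAdeleRing.ringEquiv_mixedSpace K t) hr
  obtain ⟨m, rfl⟩ := (mixedEmbedding.mem_span_latticeBasis K).mp hz
  refine ⟨(m, n), (dist_pi_lt_iff hr).mpr fun w ↦ ?_⟩
  rw [dist_comm, dist_eq_norm]
  refine (InfiniteAdeleRing.norm_apply_le_norm_ringEquiv_mixedSpace
    (algebraMap K K∞ (algebraMap (𝓞 K) K m / q ^ n) - (id t : K∞)) w).trans_lt (hzt.trans_eq' ?_)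
  rw [map_sub, ← InfiniteAdeleRing.mixedEmbedding_eq_algebraMap_comp,
    mixedEmbedding_div_natCast_pow _ (by omega)]
  rfl

end NumberField

open IsDedekindDomain.HeightOneSpectrum

/-- (Strong approximation off the 2-adic places.) Let `K` be a number field and
`T` a finite set of places of `K` containing no 2-adic place; `T` is encoded as a finite set
`Tinf` of infinite places together with a finite set `Tfin` of finite places none of which
lies above `2`. Then for every family of targets `xinf w ∈ K_w` (`w ∈ Tinf`),
`xfin v ∈ K_v` (`v ∈ Tfin`), and every `ε > 0` (for archimedean places) and every nonzero
`γ ∈ ℤₘ₀` (the "`ε`" for nonarchimedean places, measured by the valuation), there is `ξ ∈ K`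
with `|ξ - xinf w|_w < ε` for all `w ∈ Tinf`, `|ξ - xfin v|_v < γ` for all `v ∈ Tfin`, and
`ξ ∈ O_{K_v}` for every finite place `v ∉ Tfin` whose residue characteristic is not `2`.
(Equivalently: `K` is dense in the ring of adèles of `K` with the 2-adic components
removed.) -/
theorem denseRange_in_adeles_off_two_adic_places
    (K : Type*) [Field K] [NumberField K]
    (Tinf : Finset (InfinitePlace K)) (Tfin : Finset (HeightOneSpectrum (𝓞 K)))
    (hT : ∀ v ∈ Tfin, (2 : 𝓞 K) ∉ v.asIdeal)
    (xinf : (w : InfinitePlace K) → w.Completion)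
    (xfin : (v : HeightOneSpectrum (𝓞 K)) → v.adicCompletion K)
    (ε : ℝ) (hε : 0 < ε) (γ : WithZero (Multiplicative ℤ)) (hγ : γ ≠ 0) :
    ∃ ξ : K,
      (∀ w ∈ Tinf, dist (algebraMap K w.Completion ξ) (xinf w) < ε) ∧
      (∀ v ∈ Tfin, Valued.v ((ξ : v.adicCompletion K) - xfin v) < γ) ∧
      (∀ v : HeightOneSpectrum (𝓞 K), v ∉ Tfin → ringChar (𝓞 K ⧸ v.asIdeal) ≠ 2 →
        (ξ : v.adicCompletion K) ∈ v.adicCompletionIntegers K) := by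
  obtain ⟨z, hz_close, hz_int⟩ := exists_forall_valued_sub_lt_and_valuation_le_one Tfin xfin hγ
  obtain ⟨c, hc0, hc_small⟩ := exists_ne_zero_forall_intValuation_lt Tfin hγ
  have hdense := (denseRange_algebraMap_div_pow (K := K) one_lt_two).algebraMap_const_add_mul z
    ((map_ne_zero_iff _ (IsFractionRing.injective (𝓞 K) K)).mpr hc0)
  obtain ⟨⟨m, n⟩, hmn⟩ := Metric.denseRange_iff.mp hdense xinf ε hε
  have hcorrection : ∀ v : HeightOneSpectrum (𝓞 K), ((2 : ℕ) : 𝓞 K) ∉ v.asIdeal →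
      v.valuation K (algebraMap (𝓞 K) K c * (algebraMap (𝓞 K) K m / (2 : ℕ) ^ n)) ≤
        v.intValuation c :=
    fun v h2 ↦ valuation_mul_div_pow_le v h2 c m n
  refine ⟨z + algebraMap (𝓞 K) K c * (algebraMap (𝓞 K) K m / (2 : ℕ) ^ n), fun w _ ↦ ?_,
    fun v hv ↦ ?_, fun v hv hchar ↦ ?_⟩
  · rw [dist_comm]
    exact (dist_pi_lt_iff hε).mp hmn w
  · rw [adicCompletion.coe_add, add_sub_right_comm]
    refine Valuation.map_add_lt _ (hz_close v hv) ?_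
    rw [valuedAdicCompletion_eq_valuation']
    exact (hcorrection v (by exact_mod_cast hT v hv)).trans_lt (hc_small v hv)
  · have h2 := Ideal.natCast_notMem_of_ringChar_quotient_ne v.asIdeal Nat.prime_two hchar
    rw [mem_adicCompletionIntegers, valuedAdicCompletion_eq_valuation']
    exact (Valuation.map_add _ _ _).trans
      (max_le (hz_int v hv) ((hcorrection v h2).trans (v.intValuation_le_one c)))
end

section
/- Let v be a finite place of a number field K and let a ∈ K_v^× with v(a) odd. Then the set {x ∈ O_{K_v}^× : (a,x)_v = −1} is a nonempty open subset of K_v; in particular, there exists a unit x ∈ O_{K_v}^× such that x₀² − a x₁² − x x₂² = 0 has no nontrivial solution in K_v³. -/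
open IsDedekindDomain IsDedekindDomain.HeightOneSpectrum NumberField

/-- The normalized additive valuation at a finite place `v` of a number field `K`, defined on
the completion `K_v`, with the convention `v(0) = ⊤`; a uniformizer has valuation `1`. -/
noncomputable def adicAddVal {K : Type*} [Field K] [NumberField K]
    (v : HeightOneSpectrum (𝓞 K)) (x : v.adicCompletion K) : WithTop ℤ :=
  haveI := Classical.dec (x = 0)
  if h : x = 0 then ⊤
  else ((- Multiplicative.toAdd (WithZero.unzero ((Valued.v).ne_zero_iff.mpr h)) : ℤ) : WithTop ℤ)

/-- A finite place `v` of a number field is *odd* if its residue characteristic is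
different from 2. -/
def IsOddPlace {K : Type*} [Field K] [NumberField K] (v : HeightOneSpectrum (𝓞 K)) : Prop :=
  ringChar (𝓞 K ⧸ v.asIdeal) ≠ 2

/-- `HilbertSolvable v a b` says that the Hilbert symbol `(a,b)_v` equals `1`, i.e. the equation
`x₀² - a x₁² - b x₂² = 0` has a solution `(x₀,x₁,x₂) ≠ (0,0,0)` in `K_v³`.
The Hilbert symbol `(a,b)_v` equals `-1` exactly when this fails. -/
def HilbertSolvable {K : Type*} [Field K] [NumberField K] (v : HeightOneSpectrum (𝓞 K))
    (a b : v.adicCompletion K) : Prop :=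
  ∃ x₀ x₁ x₂ : v.adicCompletion K, (x₀, x₁, x₂) ≠ (0, 0, 0) ∧ x₀ ^ 2 - a * x₁ ^ 2 - b * x₂ ^ 2 = 0

/-! Take `Δ = 1 + 4ρ`, where `ρ` lifts an element of the (finite) residue field that is not of the
form `s² + s`; such an element exists because `s ↦ s² + s` identifies `0` and `-1`. Then
`|u² - Δ| = max(|u - 1|, |2|)²` for every `u`, so the norm form `y² - Δ t²` is anisotropic and
all its values have even valuation. As `v(a)` is odd, `x₀² - a x₁² = Δ x₂²` forces `x = 0`, i.e.
`(a, Δ)_v = -1`. For openness: if `|y - x| < |4x|` then `y / x = (1 + 2c)²`, where `c² + c = w`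
with `|w| < 1` is solved by iterating the contraction `c ↦ w - c²`; hence `(a, ·)_v` is locally
constant on `K_v^×`.

Even valuation is expressed multiplicatively, as `IsSquare` of the `ℤᵐ⁰`-valued valuation; since
`0` is a square there, anisotropy of the norm form is tracked separately. -/

open Function Topology

theorem exists_forall_sq_add_self_ne (F : Type*) [Ring F] [Finite F] [Nontrivial F] :
    ∃ c : F, ∀ s : F, s ^ 2 + s ≠ c := by
  have h_not_inj : ¬Injective (fun s : F => s ^ 2 + s) := fun h =>
    neg_ne_zero.mpr one_ne_zero (h (by simp) : (-1 : F) = 0)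
  simpa [Surjective] using mt Finite.injective_iff_surjective.mpr h_not_inj

namespace Valuation

variable {L Γ₀ : Type*} [Field L] [LinearOrderedCommGroupWithZero Γ₀] (v : Valuation L Γ₀)

theorem map_sq_sub_one_add_four_mul {ρ : L} (h2 : (2 : L) ≠ 0)
    (hρ : ∀ s, v s ≤ 1 → v (s ^ 2 + s - ρ) = 1) (u : L) :
    v (u ^ 2 - (1 + 4 * ρ)) = max (v (u - 1)) (v 2) ^ 2 := by
  rcases le_or_gt (v (u - 1)) (v 2) with hle | hlt
  · have hs : v ((u - 1) / 2) ≤ 1 := by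
      rw [map_div₀]; exact div_le_one_of_le₀ hle zero_le
    have h : u ^ 2 - (1 + 4 * ρ) = 2 ^ 2 * (((u - 1) / 2) ^ 2 + (u - 1) / 2 - ρ) := by
      field_simp; ring
    rw [h, map_mul, hρ _ hs, mul_one, map_pow, max_eq_right hle]
  · have hρ1 : v ρ = 1 := by simpa using hρ 0 (by simp)
    have hsum : v (u - 1 + 2) = v (u - 1) := v.map_add_eq_of_lt_left hlt
    have hsmall : v (2 ^ 2 * ρ) < v ((u - 1) * (u - 1 + 2)) := by
      rw [map_mul, map_mul, hsum, hρ1, mul_one, map_pow, ← sq]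
      exact pow_lt_pow_left₀ hlt zero_le two_ne_zero
    have h : u ^ 2 - (1 + 4 * ρ) = (u - 1) * (u - 1 + 2) - 2 ^ 2 * ρ := by ring
    rw [h, v.map_sub_eq_of_lt_left hsmall, map_mul, hsum, max_eq_left hlt.le, sq]

theorem isSquare_map_sq_sub_mul_sq {Δ : L} (hΔ : ∀ u, IsSquare (v (u ^ 2 - Δ))) (y t : L) :
    IsSquare (v (y ^ 2 - Δ * t ^ 2)) := by
  rcases eq_or_ne t 0 with rfl | ht
  · simpa using IsSquare.sq (v y)
  · have h : y ^ 2 - Δ * t ^ 2 = t ^ 2 * ((y / t) ^ 2 - Δ) := by field_simp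
    rw [h, map_mul, map_pow]
    exact (IsSquare.sq _).mul (hΔ _)

end Valuation

section Ultrametric

variable {𝕜 : Type*} [NormedField 𝕜] [IsUltrametricDist 𝕜] [CompleteSpace 𝕜]

theorem exists_sq_add_self_eq_of_norm_lt_one {w : 𝕜} (hw : ‖w‖ < 1) :
    ∃ c : 𝕜, c ^ 2 + c = w := by
  set f : 𝕜 → 𝕜 := fun c => w - c ^ 2
  set c : ℕ → 𝕜 := fun n => f^[n] 0
  have hsucc (n : ℕ) : c (n + 1) = w - c n ^ 2 := iterate_succ_apply' f n 0
  have hbound (n : ℕ) : ‖c n‖ ≤ ‖w‖ := by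
    induction n with
    | zero => simp [c]
    | succ n ih =>
      rw [hsucc, sub_eq_add_neg]
      refine (IsUltrametricDist.norm_add_le_max _ _).trans (max_le le_rfl ?_)
      rw [norm_neg, norm_pow, sq]
      nlinarith [norm_nonneg (c n)]
  have hstep (n : ℕ) : dist (c n) (c (n + 1)) ≤ ‖w‖ * ‖w‖ ^ n := by
    induction n with
    | zero => simp [c, f, dist_eq_norm]
    | succ n ih =>
      have h : c (n + 1) - c (n + 1 + 1) = (c n - c (n + 1)) * -(c n + c (n + 1)) := by
        rw [hsucc (n + 1), hsucc n]; ring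
      rw [dist_eq_norm, h, norm_mul, norm_neg, pow_succ, ← mul_assoc]
      rw [dist_eq_norm] at ih
      exact mul_le_mul ih ((IsUltrametricDist.norm_add_le_max _ _).trans
        (max_le (hbound n) (hbound (n + 1)))) (norm_nonneg _) (by positivity)
  obtain ⟨c₀, hc₀⟩ := cauchySeq_tendsto_of_complete (cauchySeq_of_le_geometric _ _ hw hstep)
  have hfix : f c₀ = c₀ := isFixedPt_of_tendsto_iterate hc₀ (by fun_prop)
  exact ⟨c₀, by linear_combination -hfix⟩

theorem isSquare_div_of_norm_sub_lt {x y : 𝕜} (h : ‖y - x‖ < ‖4 * x‖) : IsSquare (y / x) := by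
  have h4x : 0 < ‖4 * x‖ := (norm_nonneg _).trans_lt h
  have hx : x ≠ 0 := right_ne_zero_of_mul (norm_pos_iff.mp h4x)
  obtain ⟨c, hc⟩ := exists_sq_add_self_eq_of_norm_lt_one (w := (y - x) / (4 * x))
    (by rwa [norm_div, div_lt_one h4x])
  refine ⟨1 + 2 * c, ?_⟩
  have h4 : (4 : 𝕜) ≠ 0 := left_ne_zero_of_mul (norm_pos_iff.mp h4x)
  field_simp at hc ⊢
  linear_combination -hc

end Ultrametric

namespace IsDedekindDomain.HeightOneSpectrum

variable {R : Type*} [CommRing R] [IsDedekindDomain R] {K : Type*} [Field K] [Algebra R K]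
  [IsFractionRing R K] (v : HeightOneSpectrum R)

instance [CharZero K] : CharZero (v.adicCompletion K) :=
  charZero_of_injective_algebraMap (algebraMap K _).injective

theorem valued_algebraMap_le_one (r : R) :
    Valued.v (algebraMap R (v.adicCompletion K) r) ≤ 1 :=
  (valuedAdicCompletion_eq_valuation v r).trans_le (valuation_le_one v r)

theorem valued_algebraMap_eq_one_iff {r : R} :
    Valued.v (algebraMap R (v.adicCompletion K) r) = 1 ↔ r ∉ v.asIdeal := by
  rw [valuedAdicCompletion_eq_valuation, valuation_eq_one_iff_notMem]

theorem exists_valued_sub_algebraMap_lt_one {u : v.adicCompletion K} (hu : Valued.v u ≤ 1) :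
    ∃ r : R, Valued.v (u - algebraMap R (v.adicCompletion K) r) < 1 := by
  have hball : {y : v.adicCompletion K | Valued.v (y - u) < 1} ∈ 𝓝 u :=
    Valued.mem_nhds.mpr ⟨1, by simp⟩
  obtain ⟨x, hxu⟩ := (v.denseRange_algebraMap K).mem_nhds hball
  have hx : v.valuation K x ≤ 1 := by
    rw [← valuedAdicCompletion_eq_valuation', ← sub_add_cancel (x : v.adicCompletion K) u]
    exact Valued.v.map_add_le hxu.le hu
  obtain ⟨r, hr⟩ := exists_valuation_sub_lt_of_integer v hx 1
  refine ⟨r, ?_⟩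
  have h : u - algebraMap R (v.adicCompletion K) r =
      -(algebraMap K (v.adicCompletion K) (algebraMap R K r - x)) -
        (algebraMap K (v.adicCompletion K) x - u) := by
    rw [map_sub, ← IsScalarTower.algebraMap_apply]; ring
  rw [h]
  refine (Valued.v.map_sub _ _).trans_lt (max_lt ?_ hxu)
  rw [Valuation.map_neg]
  exact (valuedAdicCompletion_eq_valuation' v _).trans_lt hr

theorem exists_valued_sq_add_self_sub_eq_one [Finite (R ⧸ v.asIdeal)] :
    ∃ ρ : v.adicCompletion K, ∀ s, Valued.v s ≤ 1 → Valued.v (s ^ 2 + s - ρ) = 1 := by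
  have : Nontrivial (R ⧸ v.asIdeal) := Ideal.Quotient.nontrivial_iff.mpr v.isPrime.ne_top
  obtain ⟨c, hc⟩ := exists_forall_sq_add_self_ne (R ⧸ v.asIdeal)
  obtain ⟨ρ, rfl⟩ := Ideal.Quotient.mk_surjective c
  set ι := algebraMap R (v.adicCompletion K)
  refine ⟨ι ρ, fun s hs => ?_⟩
  obtain ⟨r, hr⟩ := exists_valued_sub_algebraMap_lt_one v hs
  have hunit : Valued.v (ι (r ^ 2 + r - ρ)) = 1 := by
    rw [valued_algebraMap_eq_one_iff, ← Ideal.Quotient.eq_zero_iff_mem, map_sub, map_add,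
      map_pow, sub_eq_zero]
    exact hc _
  have hsmall : Valued.v ((s - ι r) * (s + ι r + 1)) < 1 := by
    rw [map_mul]
    refine mul_lt_one_of_lt_of_le hr ?_
    exact Valued.v.map_add_le (Valued.v.map_add_le hs (valued_algebraMap_le_one v r)) (map_one _).le
  have h : s ^ 2 + s - ι ρ = ι (r ^ 2 + r - ρ) + (s - ι r) * (s + ι r + 1) := by
    simp only [map_sub, map_add, map_pow]; ring
  rw [h, Valuation.map_add_eq_of_lt_left _ (hunit ▸ hsmall), hunit]

end IsDedekindDomain.HeightOneSpectrum

section NumberField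

variable {K : Type*} [Field K] [NumberField K] (v : HeightOneSpectrum (𝓞 K))

theorem adicAddVal_of_ne_zero {x : v.adicCompletion K} (hx : x ≠ 0) :
    adicAddVal v x = ((-WithZero.log (Valued.v x) : ℤ) : WithTop ℤ) := by
  rw [adicAddVal, dif_neg hx]
  conv_rhs => rw [← WithZero.coe_unzero (Valued.v.ne_zero_iff.mpr hx)]
  rfl

theorem adicAddVal_eq_zero_iff {x : v.adicCompletion K} : adicAddVal v x = 0 ↔ Valued.v x = 1 := by
  rcases eq_or_ne x 0 with rfl | hx
  · simp [adicAddVal]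
  · rw [adicAddVal_of_ne_zero v hx, ← WithZero.exp_log (Valued.v.ne_zero_iff.mpr hx)]
    simp [WithZero.exp_eq_one]

theorem not_isSquare_valued_of_adicAddVal_eq {a : v.adicCompletion K} {m : ℤ}
    (h : adicAddVal v a = (2 * m + 1 : ℤ)) : ¬IsSquare (Valued.v a) := by
  have ha : a ≠ 0 := by
    rintro rfl
    rw [adicAddVal, dif_pos rfl] at h
    exact WithTop.top_ne_coe h
  rw [adicAddVal_of_ne_zero v ha, WithTop.coe_inj] at h
  rintro ⟨r, hr⟩
  have hr0 : r ≠ 0 := by rintro rfl; simp [ha] at hr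
  rw [hr, WithZero.log_mul hr0 hr0] at h
  omega

theorem HilbertSolvable.of_mul_sq {a b s : v.adicCompletion K} (hs : s ≠ 0)
    (h : HilbertSolvable v a (b * s ^ 2)) : HilbertSolvable v a b := by
  obtain ⟨x₀, x₁, x₂, hne, heq⟩ := h
  refine ⟨x₀, x₁, s * x₂, ?_, by linear_combination heq⟩
  simpa [hs] using hne

theorem not_hilbertSolvable_of_forall_isSquare_valued_sq_sub {a Δ : v.adicCompletion K}
    (ha : ¬IsSquare (Valued.v a)) (hΔ : ∀ u, IsSquare (Valued.v (u ^ 2 - Δ)))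
    (hΔ' : ∀ u, u ^ 2 ≠ Δ) : ¬HilbertSolvable v a Δ := by
  rintro ⟨x₀, x₁, x₂, hne, h⟩
  have hx₁ : x₁ = 0 := by
    by_contra hx₁
    have hax : a * x₁ ^ 2 = x₀ ^ 2 - Δ * x₂ ^ 2 := by linear_combination -h
    have hsq := Valued.v.isSquare_map_sq_sub_mul_sq hΔ x₀ x₂
    rw [← hax, map_mul, map_pow] at hsq
    exact ha (by simpa [hx₁] using hsq.div (IsSquare.sq (Valued.v x₁)))
  subst hx₁
  have hx₂ : x₂ = 0 := by
    by_contra hx₂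
    exact hΔ' (x₀ / x₂) (by field_simp; linear_combination h)
  subst hx₂
  have hx₀ : x₀ = 0 := by simpa using h
  exact hne (by simp [hx₀])

theorem exists_valued_eq_one_not_hilbertSolvable {a : v.adicCompletion K}
    (ha : ¬IsSquare (Valued.v a)) : ∃ Δ, Valued.v Δ = 1 ∧ ¬HilbertSolvable v a Δ := by
  have : Finite (𝓞 K ⧸ v.asIdeal) := Ideal.finiteQuotientOfFreeOfNeBot _ v.ne_bot
  obtain ⟨ρ, hρ⟩ := v.exists_valued_sq_add_self_sub_eq_one (K := K)
  have hΔ := Valued.v.map_sq_sub_one_add_four_mul two_ne_zero hρ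
  have h2 : Valued.v (2 : v.adicCompletion K) ≤ 1 := by
    rw [← one_add_one_eq_two]
    exact Valued.v.map_add_le (map_one _).le (map_one _).le
  set Δ := 1 + 4 * ρ
  have hΔ (u : v.adicCompletion K) :
      Valued.v (u ^ 2 - Δ) = max (Valued.v (u - 1)) (Valued.v (2 : v.adicCompletion K)) ^ 2 :=
    Valued.v.map_sq_sub_one_add_four_mul two_ne_zero hρ u
  have hΔ1 : Valued.v Δ = 1 := by simpa [max_eq_left h2] using hΔ 0
  have hΔ_ne_sq (u : v.adicCompletion K) : u ^ 2 ≠ Δ := fun hu => by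
    have h := hΔ u
    rw [hu, sub_self, map_zero, eq_comm, pow_eq_zero_iff two_ne_zero] at h
    exact two_ne_zero (Valued.v.zero_iff.mp (le_zero_iff.mp (h ▸ le_max_right _ _)))
  exact ⟨Δ, hΔ1, not_hilbertSolvable_of_forall_isSquare_valued_sq_sub v ha
    (fun u => hΔ u ▸ IsSquare.sq _) hΔ_ne_sq⟩

theorem isOpen_setOf_valued_eq_one_and_not_hilbertSolvable (a : v.adicCompletion K) :
    IsOpen {x : v.adicCompletion K | Valued.v x = 1 ∧ ¬HilbertSolvable v a x} := by
  refine Metric.isOpen_iff.mpr fun x ⟨hx, hxa⟩ => ?_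
  have hx0 : x ≠ 0 := Valued.v.ne_zero_iff.mp (by simp [hx])
  refine ⟨‖4 * x‖, norm_pos_iff.mpr (mul_ne_zero (by norm_num) hx0), fun y hy => ?_⟩
  rw [Metric.mem_ball, dist_eq_norm] at hy
  have hyx : Valued.v (y - x) < Valued.v x := by
    rw [← Valued.toNormedField.norm_lt_iff]
    refine hy.trans_le ?_
    rw [norm_mul]
    exact mul_le_of_le_one_left (norm_nonneg x) (IsUltrametricDist.norm_natCast_le_one _ 4)
  have hy1 : Valued.v y = 1 := by
    rw [← sub_add_cancel y x, Valued.v.map_add_eq_of_lt_right hyx, hx]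
  obtain ⟨s, hs⟩ := isSquare_div_of_norm_sub_lt hy
  rw [← sq, div_eq_iff hx0, mul_comm] at hs
  have hs0 : s ≠ 0 := by rintro rfl; simp [hs] at hy1
  exact ⟨hy1, fun hya => hxa (HilbertSolvable.of_mul_sq v hs0 (hs ▸ hya))⟩

end NumberField

theorem hilbert_symbol_neg_one_units_isOpen_nonempty_of_odd_valuation_general
    {K : Type*} [Field K] [NumberField K] (v : HeightOneSpectrum (𝓞 K))
    (a : v.adicCompletion K)
    (hva : ∃ m : ℤ, adicAddVal v a = (2 * m + 1 : ℤ)) :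
    (IsOpen {x : v.adicCompletion K | adicAddVal v x = 0 ∧ ¬HilbertSolvable v a x} ∧
      {x : v.adicCompletion K | adicAddVal v x = 0 ∧ ¬HilbertSolvable v a x}.Nonempty) ∧
    ∃ x : v.adicCompletion K, adicAddVal v x = 0 ∧ ¬HilbertSolvable v a x := by
  obtain ⟨m, hm⟩ := hva
  obtain ⟨Δ, hΔ⟩ := exists_valued_eq_one_not_hilbertSolvable v
    (not_isSquare_valued_of_adicAddVal_eq v hm)
  simp only [adicAddVal_eq_zero_iff]
  exact ⟨⟨isOpen_setOf_valued_eq_one_and_not_hilbertSolvable v a, Δ, hΔ⟩, Δ, hΔ⟩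

/-- Let `v` be a finite place of a number field `K` and `a ∈ K_v^×` with `v(a)`
odd. Then the set `{x ∈ O_{K_v}^× : (a,x)_v = -1}` is a nonempty open subset of `K_v`; in
particular there is a unit `x` of `O_{K_v}` such that `x₀² - a x₁² - x x₂² = 0` has no
nontrivial solution in `K_v³`.
(An element of `K_v` is a unit of `O_{K_v}` iff its normalized additive valuation is `0`.) -/
theorem hilbert_symbol_neg_one_units_isOpen_nonempty_of_odd_valuation
    {K : Type*} [Field K] [NumberField K] (v : HeightOneSpectrum (𝓞 K))
    (a : v.adicCompletion K) (ha : a ≠ 0)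
    (hva : ∃ m : ℤ, adicAddVal v a = (2 * m + 1 : ℤ)) :
    (IsOpen {x : v.adicCompletion K | adicAddVal v x = 0 ∧ ¬HilbertSolvable v a x} ∧
      {x : v.adicCompletion K | adicAddVal v x = 0 ∧ ¬HilbertSolvable v a x}.Nonempty) ∧
    ∃ x : v.adicCompletion K, adicAddVal v x = 0 ∧ ¬HilbertSolvable v a x :=
  hilbert_symbol_neg_one_units_isOpen_nonempty_of_odd_valuation_general v a hva
end

section
/- Let K be a number field and let S be a finite nonempty set of places of K containing no complex place and no 2-adic place. Then there exists a ∈ O_K which is not a square in K and satisfies: τ_v(a) < 0 for every real place v ∈ S (where τ_v : K → ℝ is the corresponding real embedding); a is a square in K_w^× for every 2-adic place w of K; and v(a) is odd for every finite place v ∈ S. In particular, a is not a square in K_v for every v ∈ S. -/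
open IsDedekindDomain IsDedekindDomain.HeightOneSpectrum NumberField

/-!
By the Chinese remainder theorem there is `b ≡ 1 mod 8` with `b ≡ π_v mod v²` for a uniformizer
`π_v` at each `v ∈ Sfin`; subtracting a large multiple of the positive integer `N(J) ∈ J`,
`J = 8 · ∏ v²`, keeps these congruences and makes every real embedding negative. The result `a`
has `v(a) = 1` for `v ∈ Sfin`, so it is not a square there, hence not in `K`. At a 2-adic place
`a = 1 + 8c` with `c` integral is the square of `1 + 2z`, where `z² + z = 2c` is solved by the
contraction `z ↦ 2c - z²` of the complete field `K_w`.
-/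

open Filter Topology WithZero

namespace Valued

instance nonarchimedeanAddGroup {R Γ₀ : Type*} [Ring R] [LinearOrderedCommGroupWithZero Γ₀]
    [Valued R Γ₀] : NonarchimedeanAddGroup R where
  is_nonarchimedean U hU := by
    obtain ⟨γ, -, hγ⟩ := (hasBasis_nhds_zero R Γ₀).mem_iff.mp hU
    exact ⟨⟨v.restrict.ltAddSubgroup γ,
      by simpa [Valuation.ltAddSubgroup] using isOpen_ball R γ.1⟩, hγ⟩

variable {L Γ₀ : Type*} [Field L] [LinearOrderedCommGroupWithZero Γ₀] [MulArchimedean Γ₀]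
  [Valued L Γ₀]

lemma tendsto_zero_of_v_le_pow {c : L} (hc : v c < 1) {f : ℕ → L}
    (hf : ∀ n, v (f n) ≤ v c ^ n) : Tendsto f atTop (𝓝 0) := by
  have hpow := tendsto_zero_pow_of_v_lt_one hc
  rw [(hasBasis_nhds_zero L Γ₀).tendsto_right_iff] at hpow ⊢
  intro γ _
  filter_upwards [hpow γ trivial] with n hn
  exact lt_of_le_of_lt (v.restrict_le_iff.2 ((hf n).trans_eq (map_pow _ _ _).symm)) hn

/-- The iteration `z ↦ c - z²` from `0` stays in the ball `v z ≤ v c`, where it contracts by the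
factor `v c`. -/
lemma exists_sq_add_self_eq [CompleteSpace L] {c : L} (hc : v c < 1) :
    ∃ z : L, z ^ 2 + z = c := by
  set f : L → L := fun z ↦ c - z ^ 2
  set z : ℕ → L := fun n ↦ f^[n] 0
  have hz_succ (n : ℕ) : z (n + 1) = c - z n ^ 2 := Function.iterate_succ_apply' f n 0
  have hz_le (n : ℕ) : v (z n) ≤ v c := by
    induction n with
    | zero => simp [z]
    | succ n ih =>
      rw [hz_succ]
      refine (Valuation.map_sub _ _ _).trans (max_le le_rfl ?_)
      rw [map_pow]
      calc v (z n) ^ 2 ≤ v c ^ 2 := pow_le_pow_left₀ zero_le ih 2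
        _ ≤ v c := pow_le_of_le_one zero_le hc.le two_ne_zero
  have hz_sub (n : ℕ) : v (z (n + 1) - z n) ≤ v c ^ n := by
    induction n with
    | zero => simpa [hz_succ, z] using hc.le
    | succ n ih =>
      have h : z (n + 2) - z (n + 1) = -(z (n + 1) - z n) * (z (n + 1) + z n) := by
        rw [hz_succ (n + 1), hz_succ n]; ring
      rw [h, map_mul, Valuation.map_neg, pow_succ]
      exact mul_le_mul' ih ((Valuation.map_add _ _ _).trans (max_le (hz_le _) (hz_le _)))
  obtain ⟨y, hy⟩ := cauchySeq_tendsto_of_complete <|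
    NonarchimedeanAddGroup.cauchySeq_of_tendsto_sub_nhds_zero (tendsto_zero_of_v_le_pow hc hz_sub)
  have hfix : f y = y := isFixedPt_of_tendsto_iterate hy (by fun_prop)
  exact ⟨y, by linear_combination -hfix⟩

lemma exists_sq_eq_one_add_eight_mul [CompleteSpace L] (h2 : v (2 : L) < 1) {c : L}
    (hc : v c ≤ 1) : ∃ y : L, y ^ 2 = 1 + 8 * c := by
  obtain ⟨z, hz⟩ := exists_sq_add_self_eq (c := 2 * c) <| by
    rw [map_mul]; exact mul_lt_one_of_lt_of_le h2 hc
  exact ⟨1 + 2 * z, by linear_combination 4 * hz⟩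

end Valued

lemma Valuation.not_exists_sq_eq_of_eq_exp_of_odd {R : Type*} [Ring R] (v : Valuation R ℤᵐ⁰)
    {x : R} {n : ℤ} (hx : v x = exp n) (hn : Odd n) : ¬∃ y : R, y ^ 2 = x := by
  rintro ⟨y, rfl⟩
  have hy : v y ≠ 0 := fun h ↦ exp_ne_zero (by rw [← hx, map_pow, h, zero_pow two_ne_zero])
  rw [map_pow, ← exp_log hy, ← exp_nsmul, exp_inj] at hx
  exact Int.not_even_iff_odd.2 hn ⟨log (v y), by simpa [two_mul] using hx.symm⟩

lemma Ideal.isCoprime_span_singleton_of_notMem {R : Type*} [CommRing R] {M : Ideal R}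
    (hM : M.IsMaximal) {x : R} (hx : x ∉ M) : IsCoprime (Ideal.span {x}) M := by
  rw [Ideal.isCoprime_iff_sup_eq, sup_comm]
  exact hM.out.2 _ (Submodule.lt_sup_iff_notMem.2 hx)

namespace IsDedekindDomain

variable {R : Type*} [CommRing R] [IsDedekindDomain R]

lemma exists_sub_mem_and_forall_sub_mem_pow {I : Ideal R} {S : Finset (HeightOneSpectrum R)}
    (hI : ∀ v ∈ S, IsCoprime I v.asIdeal) (e : HeightOneSpectrum R → ℕ) (x : R)
    (y : HeightOneSpectrum R → R) :
    ∃ b : R, b - x ∈ I ∧ ∀ v ∈ S, b - y v ∈ v.asIdeal ^ e v := by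
  obtain ⟨c, hc⟩ := exists_forall_sub_mem_ideal (s := S) (fun v ↦ v.asIdeal) e
    (fun v _ ↦ v.prime) (fun v _ w _ hvw h ↦ hvw (HeightOneSpectrum.ext h)) (fun v ↦ y v)
  obtain ⟨i, hi, j, hj, hij⟩ :=
    (IsCoprime.prod_right fun v hv ↦ (hI v hv).pow_right (n := e v)).exists
  refine ⟨c * i + x * j, ?_, fun v hv ↦ ?_⟩
  · have : c * i + x * j - x = (c - x) * i := by linear_combination x * hij
    exact this ▸ I.mul_mem_left _ hi
  · have : c * i + x * j - c = (x - c) * j := by linear_combination c * hij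
    have hmem : c * i + x * j - c ∈ v.asIdeal ^ e v :=
      Ideal.le_of_dvd (Finset.dvd_prod_of_mem _ hv) (this ▸ Ideal.mul_mem_left _ _ hj)
    simpa only [sub_add_sub_cancel] using add_mem hmem (hc v hv)

namespace HeightOneSpectrum

variable (v : HeightOneSpectrum R)

lemma intValuation_eq_exp_neg_one_of_sub_mem_sq {π a : R} (hπ : v.intValuation π = exp (-1))
    (ha : a - π ∈ v.asIdeal ^ 2) : v.intValuation a = exp (-1) := by
  refine hπ ▸ Valuation.map_eq_of_sub_lt _ (hπ ▸ ?_)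
  exact ((v.intValuation_le_pow_iff_mem _ 2).2 ha).trans_lt (exp_lt_exp.2 (by norm_num))

variable {K : Type*} [Field K] [Algebra R K] [IsFractionRing R K]

lemma valued_algebraMap_eq_intValuation (r : R) :
    Valued.v ((algebraMap R K r : K) : v.adicCompletion K) = v.intValuation r := by
  rw [valuedAdicCompletion_eq_valuation', valuation_of_algebraMap]

lemma exists_sq_eq_of_sub_one_mem_span_eight (h2 : (2 : R) ∈ v.asIdeal) {a : R}
    (ha : a - 1 ∈ Ideal.span {8}) : ∃ y : v.adicCompletion K, y ^ 2 = algebraMap R K a := by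
  obtain ⟨c, hc⟩ := Ideal.mem_span_singleton'.1 ha
  have hcoe (k : K) : (k : v.adicCompletion K) = algebraMap K (v.adicCompletion K) k := rfl
  have hv2 : Valued.v (2 : v.adicCompletion K) < 1 := by
    have h := v.valued_algebraMap_eq_intValuation (K := K) 2
    rw [hcoe, map_ofNat, map_ofNat] at h
    exact h ▸ (v.intValuation_lt_one_iff_mem 2).2 h2
  obtain ⟨y, hy⟩ := Valued.exists_sq_eq_one_add_eight_mul hv2
    ((v.valued_algebraMap_eq_intValuation (K := K) c).trans_le (v.intValuation_le_one c))
  refine ⟨y, hy.trans ?_⟩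
  rw [show a = 1 + 8 * c by linear_combination -hc, hcoe, hcoe]
  simp only [map_add, map_mul, map_one, map_ofNat]

end HeightOneSpectrum

end IsDedekindDomain

namespace NumberField

variable {K : Type*} [Field K] [NumberField K]

lemma adicAddVal_eq_of_valued_eq_exp {v : HeightOneSpectrum (𝓞 K)} {x : v.adicCompletion K}
    {n : ℤ} (hx : Valued.v x = exp n) : adicAddVal v x = (-n : ℤ) := by
  have hx0 : x ≠ 0 := fun h ↦ exp_ne_zero (by rw [← hx, h, map_zero])
  have hunzero : unzero ((Valued.v).ne_zero_iff.mpr hx0) = Multiplicative.ofAdd n :=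
    coe_injective (by rw [coe_unzero, hx]; rfl)
  rw [adicAddVal, dif_neg hx0, hunzero, toAdd_ofAdd]

lemma exists_sub_mem_forall_embedding_neg {I : Ideal (𝓞 K)} (hI : I ≠ ⊥) (b : 𝓞 K) :
    ∃ a : 𝓞 K, a - b ∈ I ∧
      ∀ (w : InfinitePlace K) (hw : w.IsReal), InfinitePlace.embedding_of_isReal hw (a : K) < 0 := by
  set N : ℕ := Ideal.absNorm I
  have hN : 0 < (N : ℝ) := by
    exact_mod_cast Nat.pos_of_ne_zero (Ideal.absNorm_eq_zero_iff.not.2 hI)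
  obtain ⟨T, hT⟩ : ∃ T : ℕ, ∀ w : {w : InfinitePlace K // w.IsReal},
      InfinitePlace.embedding_of_isReal w.2 (b : K) < T * N :=
    (eventually_all.2 fun w ↦
      (tendsto_natCast_atTop_atTop.atTop_mul_const hN).eventually_gt_atTop _).exists
  refine ⟨b - (T * N : ℕ), ?_, fun w hw ↦ ?_⟩
  · simpa using I.mul_mem_left (T : 𝓞 K) (Ideal.absNorm_mem I)
  · simpa using hT ⟨w, hw⟩

lemma exists_sub_one_mem_span_eight_forall_intValuation_forall_embedding_neg
    {S : Finset (HeightOneSpectrum (𝓞 K))} (hS : ∀ v ∈ S, (2 : 𝓞 K) ∉ v.asIdeal) :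
    ∃ a : 𝓞 K, a - 1 ∈ Ideal.span {8} ∧ (∀ v ∈ S, v.intValuation a = exp (-1)) ∧
      ∀ (w : InfinitePlace K) (hw : w.IsReal), InfinitePlace.embedding_of_isReal hw (a : K) < 0 := by
  choose π hπ using fun v : HeightOneSpectrum (𝓞 K) ↦ v.intValuation_exists_uniformizer
  have hcop (v) (hv : v ∈ S) : IsCoprime (Ideal.span {(8 : 𝓞 K)}) v.asIdeal := by
    have h2 := Ideal.isCoprime_span_singleton_of_notMem v.isMaximal (hS v hv)
    rw [show (8 : 𝓞 K) = 2 ^ 3 by norm_num, ← Ideal.span_singleton_pow]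
    exact h2.pow_left
  obtain ⟨b, hb1, hbπ⟩ := exists_sub_mem_and_forall_sub_mem_pow hcop (fun _ ↦ 2) 1 π
  have hJ : Ideal.span {(8 : 𝓞 K)} * ∏ v ∈ S, v.asIdeal ^ 2 ≠ ⊥ :=
    mul_ne_zero (by simp) (Finset.prod_ne_zero_iff.2 fun v _ ↦ pow_ne_zero _ v.ne_bot)
  obtain ⟨a, hab, ha_neg⟩ := exists_sub_mem_forall_embedding_neg hJ b
  refine ⟨a, ?_, fun v hv ↦ ?_, ha_neg⟩
  · simpa only [sub_add_sub_cancel] using add_mem (Ideal.mul_le_left hab) hb1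
  · refine v.intValuation_eq_exp_neg_one_of_sub_mem_sq (hπ v) ?_
    have hle : ∏ w ∈ S, w.asIdeal ^ 2 ≤ v.asIdeal ^ 2 :=
      Ideal.le_of_dvd (Finset.dvd_prod_of_mem _ hv)
    simpa only [sub_add_sub_cancel] using add_mem (hle (Ideal.mul_le_right hab)) (hbπ v hv)

end NumberField

/-- Let `K` be a number field and `S` a finite nonempty set of places of `K`
containing no complex place and no 2-adic place (`S` is given as a set `Sinf` of infinite
places, all real, together with a set `Sfin` of finite places, none above `2`). Then there
exists `a ∈ O_K`, not a square in `K`, with: `τ_v(a) < 0` for every real place `v ∈ S`;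
`a` a square in `K_w^×` for every 2-adic place `w` of `K`; and `v(a)` odd for every finite
place `v ∈ S`. In particular, `a` is not a square in `K_v` for every `v ∈ S`. -/
theorem exists_integer_nonsquare_with_local_conditions
    (K : Type*) [Field K] [NumberField K]
    (Sinf : Finset (InfinitePlace K)) (Sfin : Finset (HeightOneSpectrum (𝓞 K)))
    (hSreal : ∀ w ∈ Sinf, w.IsReal)
    (hSodd : ∀ v ∈ Sfin, (2 : 𝓞 K) ∉ v.asIdeal)
    (hS : Sinf.Nonempty ∨ Sfin.Nonempty) :
    ∃ a : 𝓞 K,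
      (¬∃ b : K, b ^ 2 = (a : K)) ∧
      (∀ w ∈ Sinf, ∀ hw : w.IsReal, InfinitePlace.embedding_of_isReal hw (a : K) < 0) ∧
      (∀ w : HeightOneSpectrum (𝓞 K), (2 : 𝓞 K) ∈ w.asIdeal →
        ∃ y : w.adicCompletion K, y ≠ 0 ∧ y ^ 2 = ((a : K) : w.adicCompletion K)) ∧
      (∀ v ∈ Sfin, ∃ m : ℤ, adicAddVal v ((a : K) : v.adicCompletion K) = (2 * m + 1 : ℤ)) ∧
      (∀ w ∈ Sinf, ∀ hw : w.IsReal,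
        ¬∃ t : ℝ, t ^ 2 = InfinitePlace.embedding_of_isReal hw (a : K)) ∧
      (∀ v ∈ Sfin, ¬∃ y : v.adicCompletion K, y ^ 2 = ((a : K) : v.adicCompletion K)) := by
  obtain ⟨a, ha1, hav, ha_neg⟩ :=
    exists_sub_one_mem_span_eight_forall_intValuation_forall_embedding_neg hSodd
  have hval (v) (hv : v ∈ Sfin) : Valued.v ((a : K) : v.adicCompletion K) = exp (-1) :=
    (v.valued_algebraMap_eq_intValuation a).trans (hav v hv)
  have hnsq_fin (v) (hv : v ∈ Sfin) : ¬∃ y : v.adicCompletion K, y ^ 2 = (a : K) :=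
    Valued.v.not_exists_sq_eq_of_eq_exp_of_odd (hval v hv) (by decide)
  have hnsq : ¬∃ y : K, y ^ 2 = a := by
    rintro ⟨y, hy⟩
    rcases hS with ⟨w, hw⟩ | ⟨v, hv⟩
    · have h := ha_neg w (hSreal w hw)
      rw [← hy, map_pow] at h
      exact (sq_nonneg _).not_gt h
    · exact hnsq_fin v hv ⟨y, by rw [← hy]; exact (map_pow (algebraMap K _) y 2).symm⟩
  refine ⟨a, hnsq, fun w _ hw ↦ ha_neg w hw, fun w hw ↦ ?_, fun v hv ↦ ⟨0, ?_⟩,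
    fun w _ hw ⟨t, ht⟩ ↦ (sq_nonneg t).not_gt (ht ▸ ha_neg w hw), hnsq_fin⟩
  · obtain ⟨y, hy⟩ := w.exists_sq_eq_of_sub_one_mem_span_eight (K := K) hw ha1
    refine ⟨y, ?_, hy⟩
    rintro rfl
    have ha0 : algebraMap K (w.adicCompletion K) a = 0 := by
      rw [← zero_pow two_ne_zero]; exact hy.symm
    exact hnsq ⟨0, by rw [(map_eq_zero _).1 ha0]; ring⟩
  · simpa using adicAddVal_eq_of_valued_eq_exp (hval v hv)
end

section
/- Let v be an odd finite place of a number field K and let a, b, c ∈ K_v^× with v(b) > 0 and v(c) ≥ 0. Then for every x ∈ K_v such that cx² + 1 ≠ 0 and (1+cb²)x² + b² ≠ 0, it is impossible that both (a, cx² + 1)_v = −1 and (a, (1+cb²)x² + b²)_v = −1. -/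
/-!
At an odd place `‖2‖ = 1`, and then every `u` with `‖u - 1‖ < 1` is a square: writing
`u = 1 + ε`, the map `t ↦ (ε - t²) / 2` is a contraction of the closed ball of radius `‖ε‖`,
and its fixed point `t` satisfies `(1 + t)² = 1 + ε`.

If `‖c x²‖ < 1`, this makes `c x² + 1` a square. Otherwise `‖x‖ ≥ 1` because `‖c‖ ≤ 1`, and
`((1 + c b²) x² + b²) / x² = 1 + c b² + b² / x²` lies within `‖b‖² < 1` of `1`, so the second
factor is a square. A square `b` makes `(a, b)_v = 1` via the solution `(√b, 0, 1)`.
-/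

open IsDedekindDomain IsDedekindDomain.HeightOneSpectrum NumberField

open Metric Set

section Ultrametric

variable {F : Type*} [NormedField F] [IsUltrametricDist F] [CompleteSpace F]

theorem isSquare_of_norm_sub_one_lt_one (h2 : ‖(2 : F)‖ = 1) {u : F} (hu : ‖u - 1‖ < 1) :
    IsSquare u := by
  set ε := u - 1 with hε
  set f : F → F := fun t ↦ (ε - t ^ 2) / 2
  have hsq : ∀ t ∈ closedBall (0 : F) ‖ε‖, ‖t ^ 2‖ ≤ ‖ε‖ := fun t ht ↦ by
    rw [mem_closedBall_zero_iff] at ht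
    rw [norm_pow]
    nlinarith [norm_nonneg t]
  have hmaps : MapsTo f (closedBall 0 ‖ε‖) (closedBall 0 ‖ε‖) := fun t ht ↦ by
    rw [mem_closedBall_zero_iff, norm_div, h2, div_one, sub_eq_add_neg]
    exact (IsUltrametricDist.norm_add_le_max _ _).trans
      (max_le le_rfl ((norm_neg _).trans_le (hsq t ht)))
  have hlip : LipschitzOnWith ‖ε‖₊ f (closedBall 0 ‖ε‖) := by
    refine LipschitzOnWith.of_dist_le_mul fun t ht s hs ↦ ?_
    rw [mem_closedBall_zero_iff] at ht hs
    have hdiff : f t - f s = (s - t) * (s + t) / 2 := by ring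
    rw [dist_eq_norm, dist_eq_norm, hdiff, norm_div, h2, div_one, norm_mul, norm_sub_rev,
      coe_nnnorm, mul_comm]
    exact mul_le_mul_of_nonneg_right
      ((IsUltrametricDist.norm_add_le_max _ _).trans (max_le hs ht)) (norm_nonneg _)
  obtain ⟨t, -, hfix, -⟩ := ContractingWith.exists_fixedPoint' isClosed_closedBall.isComplete
    hmaps ⟨by exact_mod_cast hu, hlip.mapsToRestrict hmaps⟩ (mem_closedBall_self (norm_nonneg ε))
    (edist_ne_top _ _)
  have h2' : (2 : F) ≠ 0 := by rintro h; simp [h] at h2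
  have hfix : (ε - t ^ 2) / 2 = t := hfix
  field_simp at hfix
  exact ⟨1 + t, by linear_combination hfix - hε⟩

theorem isSquare_or_isSquare_of_norm_lt_one (h2 : ‖(2 : F)‖ = 1) {b c : F} (hb : ‖b‖ < 1)
    (hc : ‖c‖ ≤ 1) (x : F) :
    IsSquare (c * x ^ 2 + 1) ∨ IsSquare ((1 + c * b ^ 2) * x ^ 2 + b ^ 2) := by
  rcases lt_or_ge ‖c * x ^ 2‖ 1 with hcx | hcx
  · exact .inl (isSquare_of_norm_sub_one_lt_one h2 (by rwa [add_sub_cancel_right]))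
  right
  rw [norm_mul, norm_pow] at hcx
  have hx : 1 ≤ ‖x‖ ^ 2 := by nlinarith [norm_nonneg c, sq_nonneg ‖x‖]
  have hx0 : x ≠ 0 := by rintro rfl; norm_num at hx
  have hb2 : ‖b‖ ^ 2 < 1 := by nlinarith [norm_nonneg b]
  have hu : ‖(1 + c * b ^ 2 + b ^ 2 / x ^ 2) - 1‖ < 1 := by
    rw [add_assoc, add_sub_cancel_left]
    refine (IsUltrametricDist.norm_add_le_max _ _).trans_lt (max_lt ?_ ?_)
    · rw [norm_mul, norm_pow]
      nlinarith [norm_nonneg c, sq_nonneg ‖b‖]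
    · rw [norm_div, norm_pow, norm_pow, div_lt_one (by positivity)]
      linarith
  have hfactor : (1 + c * b ^ 2) * x ^ 2 + b ^ 2 = x ^ 2 * (1 + c * b ^ 2 + b ^ 2 / x ^ 2) := by
    field_simp
  rw [hfactor]
  exact (IsSquare.sq x).mul (isSquare_of_norm_sub_one_lt_one h2 hu)

end Ultrametric

section AdicCompletion

variable {K : Type*} [Field K] [NumberField K] (v : HeightOneSpectrum (𝓞 K))

theorem two_notMem_asIdeal (hv : IsOddPlace v) : (2 : 𝓞 K) ∉ v.asIdeal := by
  intro h2
  have : Nontrivial (𝓞 K ⧸ v.asIdeal) := Ideal.Quotient.nontrivial_iff.mpr v.isPrime.ne_top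
  refine hv (CharP.ringChar_of_prime_eq_zero Nat.prime_two ?_)
  rw [Nat.cast_ofNat, ← map_ofNat (Ideal.Quotient.mk v.asIdeal)]
  exact Ideal.Quotient.eq_zero_iff_mem.mpr h2

theorem norm_two_eq_one (hv : IsOddPlace v) : ‖(2 : v.adicCompletion K)‖ = 1 := by
  have h := (FinitePlace.norm_eq_one_iff_notMem K v 2).mpr (two_notMem_asIdeal v hv)
  rwa [map_ofNat, map_ofNat] at h

theorem exists_adicAddVal_eq_and_valued_eq_exp {y : v.adicCompletion K} (hy : y ≠ 0) :
    ∃ n : ℤ, adicAddVal v y = n ∧ Valued.v y = WithZero.exp (-n) := by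
  refine ⟨_, by rw [adicAddVal, dif_neg hy], ?_⟩
  simp [WithZero.exp_eq_coe_ofAdd]

theorem adicAddVal_pos_iff (y : v.adicCompletion K) : 0 < adicAddVal v y ↔ ‖y‖ < 1 := by
  rw [Valued.toNormedField.norm_lt_one_iff]
  rcases eq_or_ne y 0 with rfl | hy
  · simp [adicAddVal]
  obtain ⟨n, hn, hvy⟩ := exists_adicAddVal_eq_and_valued_eq_exp v hy
  rw [hn, hvy, ← WithZero.exp_zero, WithZero.exp_lt_exp]
  norm_cast
  omega

theorem adicAddVal_nonneg_iff (y : v.adicCompletion K) : 0 ≤ adicAddVal v y ↔ ‖y‖ ≤ 1 := by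
  rw [Valued.toNormedField.norm_le_one_iff]
  rcases eq_or_ne y 0 with rfl | hy
  · simp [adicAddVal]
  obtain ⟨n, hn, hvy⟩ := exists_adicAddVal_eq_and_valued_eq_exp v hy
  rw [hn, hvy, ← WithZero.exp_zero, WithZero.exp_le_exp]
  norm_cast
  omega

theorem hilbertSolvable_of_isSquare {a b : v.adicCompletion K} (hb : IsSquare b) :
    HilbertSolvable v a b := by
  obtain ⟨r, rfl⟩ := hb
  exact ⟨r, 0, 1, by simp, by ring⟩

end AdicCompletion

theorem chatelet_factors_not_both_neg_one_of_pos_val_general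
    {K : Type*} [Field K] [NumberField K] (v : HeightOneSpectrum (𝓞 K))
    (hv : IsOddPlace v) (a b c : v.adicCompletion K)
    (hvb : 0 < adicAddVal v b) (hvc : 0 ≤ adicAddVal v c) :
    ∀ x : v.adicCompletion K, c * x ^ 2 + 1 ≠ 0 → (1 + c * b ^ 2) * x ^ 2 + b ^ 2 ≠ 0 →
      ¬(¬HilbertSolvable v a (c * x ^ 2 + 1) ∧
        ¬HilbertSolvable v a ((1 + c * b ^ 2) * x ^ 2 + b ^ 2)) := by
  rintro x - - ⟨h₁, h₂⟩
  rcases isSquare_or_isSquare_of_norm_lt_one (norm_two_eq_one v hv)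
    ((adicAddVal_pos_iff v b).mp hvb) ((adicAddVal_nonneg_iff v c).mp hvc) x with h | h
  · exact h₁ (hilbertSolvable_of_isSquare v h)
  · exact h₂ (hilbertSolvable_of_isSquare v h)

/-- Let `v` be an odd finite place of a number field `K` and `a, b, c ∈ K_v^×`
with `v(b) > 0` and `v(c) ≥ 0`. Then for every `x ∈ K_v` such that `cx² + 1 ≠ 0` and
`(1+cb²)x² + b² ≠ 0`, it is impossible that both `(a, cx² + 1)_v = -1` and
`(a, (1+cb²)x² + b²)_v = -1`. -/
theorem chatelet_factors_not_both_neg_one_of_pos_val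
    {K : Type*} [Field K] [NumberField K] (v : HeightOneSpectrum (𝓞 K))
    (hv : IsOddPlace v) (a b c : v.adicCompletion K) (ha : a ≠ 0) (hb : b ≠ 0) (hc : c ≠ 0)
    (hvb : 0 < adicAddVal v b) (hvc : 0 ≤ adicAddVal v c) :
    ∀ x : v.adicCompletion K, c * x ^ 2 + 1 ≠ 0 → (1 + c * b ^ 2) * x ^ 2 + b ^ 2 ≠ 0 →
      ¬(¬HilbertSolvable v a (c * x ^ 2 + 1) ∧
        ¬HilbertSolvable v a ((1 + c * b ^ 2) * x ^ 2 + b ^ 2)) :=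
  chatelet_factors_not_both_neg_one_of_pos_val_general v hv a b c hvb hvc
end
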